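/- arXiv:2309.01460 — 5 statements merged into one kernel-verified Lean document; each statement's English description precedes it below -/
import Mathlib

section
/- Let δ ∈ [3/4, 1] and define a sequence by x_2 ≥ δ and x_{l+2} ≥ δ + (1−δ)·x_l^4 for even l ≥ 2, with all x_l ∈ [0,1]. Then x_l ≥ 1 − 2/l for all even l ≥ 2. -/
lemma stmt3_aux (δ L a : ℝ) (hδ1 : 3/4 ≤ δ) (hδ2 : δ ≤ 1) (hL : 2 ≤ L)
    (ha1 : 1 - 2/L ≤ a) (ha2 : a ≤ 1) : 1 - 2/(L+2) ≤ δ + (1-δ)*a^4 := by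
  have hL0 : (0:ℝ) < L := by linarith
  have hL2 : (0:ℝ) < L + 2 := by linarith
  have ha0 : (0:ℝ) ≤ 1 - 2/L := by
    rw [sub_nonneg, div_le_one hL0]; exact hL
  have h4 : (1-2/L)^4 ≤ a^4 := pow_le_pow_left₀ ha0 ha1 4
  have hy1 : (1-2/L)^4 ≤ 1 := by
    apply pow_le_one₀ ha0
    have : (0:ℝ) < 2/L := by positivity
    linarith
  have step : 1 - 2/(L+2) ≤ 3/4 + (1/4) * (1-2/L)^4 := by
    rw [← sub_nonneg]
    have e : 3/4 + (1/4)*(1-2/L)^4 - (1 - 2/(L+2))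
        = (8*L^3+16*L^2-48*L+32) / (4*L^4*(L+2)) := by
      field_simp
      ring
    rw [e]
    apply div_nonneg _ (by positivity)
    nlinarith [mul_nonneg (by linarith : (0:ℝ) ≤ L-2) (sq_nonneg L), sq_nonneg (L-2)]
  nlinarith [mul_le_mul_of_nonneg_left h4 (by linarith : (0:ℝ) ≤ 1 - δ)]

/-- recursion `x_{l+2} ≥ δ + (1-δ) x_l^4` with `δ ∈ [3/4,1]` implies `x_l ≥ 1 - 2/l`
for all even `l ≥ 2`. -/
theorem stmt3 (δ : ℝ) (hδ : δ ∈ Set.Icc (3/4 : ℝ) 1) (x : ℕ → ℝ)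
    (hmem : ∀ l : ℕ, 2 ≤ l → Even l → x l ∈ Set.Icc (0:ℝ) 1)
    (hbase : δ ≤ x 2)
    (hrec : ∀ l : ℕ, 2 ≤ l → Even l → δ + (1 - δ) * (x l) ^ 4 ≤ x (l + 2)) :
    ∀ l : ℕ, 2 ≤ l → Even l → 1 - 2 / (l : ℝ) ≤ x l := by
  obtain ⟨hδ1, hδ2⟩ := hδ
  have key : ∀ k : ℕ, 1 - 2 / ((2*k+2 : ℕ) : ℝ) ≤ x (2*k+2) := by
    intro k
    induction k with
    | zero => norm_num; linarith
    | succ n ih =>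
      have hl2 : 2 ≤ 2*n+2 := by omega
      have heven : Even (2*n+2) := ⟨n+1, by ring⟩
      have hx := hrec (2*n+2) hl2 heven
      have hm := hmem (2*n+2) hl2 heven
      have hL : (2:ℝ) ≤ ((2*n+2 : ℕ) : ℝ) := by push_cast; linarith [Nat.cast_nonneg (α := ℝ) n]
      have := stmt3_aux δ ((2*n+2 : ℕ) : ℝ) (x (2*n+2)) hδ1 hδ2 hL ih hm.2
      have hcast : ((2*(n+1)+2 : ℕ) : ℝ) = ((2*n+2 : ℕ) : ℝ) + 2 := by push_cast; ring
      rw [hcast]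
      calc 1 - 2 / (((2*n+2 : ℕ) : ℝ) + 2) ≤ δ + (1-δ) * (x (2*n+2))^4 := this
        _ ≤ x (2*n+2+2) := hx
        _ = x (2*(n+1)+2) := by ring_nf
  intro l hl hle
  obtain ⟨m, hm⟩ := hle
  have hm1 : 1 ≤ m := by omega
  have : l = 2*(m-1)+2 := by omega
  rw [this]
  exact key (m-1)
end

section
/- Let L ∈ ℕ with L ≥ 3 and define f(x) = 1/(x+1) − (1/L)·(1 − (1 − 1/x)^L). Then f(x) ≥ 0 for all real x ≥ 1. -/
lemma key_sum (t : ℝ) (ht0 : 0 ≤ t) (ht1 : t ≤ 1) :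
    ∀ L : ℕ, 3 ≤ L → (∑ i ∈ Finset.range L, t ^ i) * (2 - t) ≤ L := by
  intro L hL
  induction L with
  | zero => omega
  | succ n ih =>
    rcases Nat.lt_or_ge n 3 with h | h
    · interval_cases n
      · omega
      · omega
      · -- n = 2, L = 3
        simp [Finset.sum_range_succ]
        nlinarith [sq_nonneg t, sq_nonneg (1 - t), mul_nonneg ht0 ht0,
          mul_nonneg (mul_nonneg ht0 ht0) (sub_nonneg.2 ht1)]
    · have hih := ih h
      rw [Finset.sum_range_succ, add_mul]
      have htn : t ^ n ≤ t := by
        calc t ^ n ≤ t ^ 1 := pow_le_pow_of_le_one ht0 ht1 (by omega)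
        _ = t := pow_one t
      have h1 : t ^ n * (2 - t) ≤ 1 := by
        have h2 : t * (2 - t) ≤ 1 := by nlinarith [sq_nonneg (1 - t)]
        have h3 : t ^ n * (2 - t) ≤ t * (2 - t) :=
          mul_le_mul_of_nonneg_right htn (by linarith)
        linarith
      push_cast
      linarith

/-- for `L ≥ 3` an integer, `f(x) = 1/(x+1) − (1/L)(1 − (1 − 1/x)^L) ≥ 0` on `[1,∞)`. -/
theorem stmt5 (L : ℕ) (hL : 3 ≤ L) (x : ℝ) (hx : 1 ≤ x) :
    0 ≤ 1 / (x + 1) - (1 / (L : ℝ)) * (1 - (1 - 1 / x) ^ L) := by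
  have hx0 : (0:ℝ) < x := by linarith
  have hxne : x ≠ 0 := ne_of_gt hx0
  have hx1 : (0:ℝ) < x + 1 := by linarith
  have hL0 : (0:ℝ) < (L : ℝ) := by positivity
  obtain ⟨t, ht⟩ : ∃ t : ℝ, t = 1 - 1 / x := ⟨_, rfl⟩
  rw [← ht]
  have ht0 : 0 ≤ t := by
    have : 1 / x ≤ 1 := by rw [div_le_one hx0]; linarith
    rw [ht]; linarith
  have ht1 : t ≤ 1 := by
    have : 0 < 1 / x := by positivity
    rw [ht]; linarith
  rw [sub_nonneg, div_mul_eq_mul_div, one_mul, div_le_div_iff₀ hL0 hx1, one_mul]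
  have hgeom : 1 - t ^ L = (1 - t) * ∑ i ∈ Finset.range L, t ^ i := by
    linear_combination geom_sum_mul t L
  have hfac : (1 - t) * (x + 1) = 2 - t := by
    rw [ht]; field_simp; ring
  calc (1 - t ^ L) * (x + 1) = (∑ i ∈ Finset.range L, t ^ i) * ((1 - t) * (x + 1)) := by
        rw [hgeom]; ring
    _ = (∑ i ∈ Finset.range L, t ^ i) * (2 - t) := by rw [hfac]
    _ ≤ L := key_sum t ht0 ht1 L hL
end

section
/- Let X = (X₁, X₂, X₃) be uniform on [0,1]³ and m(x) = (x₁ − 0.5)(x₂ − 0.5) + x₃. For the cell t = [a₁,a₂]×[b₁,b₂]×[c₁,c₂], Var(m(X) | X ∈ t) = H(a₁,a₂)H(b₁,b₂)/9 − (1/16)(a₂+a₁−1)²(b₂+b₁−1)² + (c₂−c₁)²/12, where H(x,y) = (x−0.5)² + (x−0.5)(y−0.5) + (y−0.5)². -/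
open MeasureTheory ProbabilityTheory

/-- The uniform distribution on the unit cube `[0,1]³`. -/
noncomputable def unifCube : Measure (Fin 3 → ℝ) :=
  volume.restrict (Set.univ.pi fun _ => Set.Icc (0:ℝ) 1)

/-- The regression function `m(x) = (x₁ − 0.5)(x₂ − 0.5) + x₃`. -/
noncomputable def mfun (x : Fin 3 → ℝ) : ℝ := (x 0 - 0.5) * (x 1 - 0.5) + x 2

/-- The cell `[a₁,a₂] × [b₁,b₂] × [c₁,c₂]`. -/
def cell3 (a₁ a₂ b₁ b₂ c₁ c₂ : ℝ) : Set (Fin 3 → ℝ) :=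
  {x | x 0 ∈ Set.Icc a₁ a₂ ∧ x 1 ∈ Set.Icc b₁ b₂ ∧ x 2 ∈ Set.Icc c₁ c₂}

/-- `H(x,y) = (x−0.5)² + (x−0.5)(y−0.5) + (y−0.5)²`. -/
noncomputable def Hfun (x y : ℝ) : ℝ :=
  (x - 0.5) ^ 2 + (x - 0.5) * (y - 0.5) + (y - 0.5) ^ 2

lemma indicator_prod_eq (S : Fin 3 → Set ℝ) (g : Fin 3 → ℝ → ℝ) :
    (Set.univ.pi S).indicator (fun x => ∏ i, g i (x i)) =
      fun x => ∏ i, (S i).indicator (g i) (x i) := by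
  ext x
  by_cases hx : x ∈ Set.univ.pi S
  · rw [Set.indicator_of_mem hx]
    exact Finset.prod_congr rfl fun i _ =>
      (Set.indicator_of_mem (hx i (Set.mem_univ i)) _).symm
  · rw [Set.indicator_of_notMem hx]
    simp only [Set.mem_pi, Set.mem_univ, forall_true_left, not_forall] at hx
    obtain ⟨i, hi⟩ := hx
    exact (Finset.prod_eq_zero (Finset.mem_univ i)
      (Set.indicator_of_notMem hi _)).symm

lemma box_integral (S : Fin 3 → Set ℝ) (hS : ∀ i, MeasurableSet (S i))
    (g : Fin 3 → ℝ → ℝ) :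
    ∫ x in Set.univ.pi S, ∏ i, g i (x i) = ∏ i, ∫ t in S i, g i t := by
  rw [← integral_indicator (MeasurableSet.univ_pi hS), indicator_prod_eq,
    integral_fintype_prod_volume_eq_prod]
  exact Finset.prod_congr rfl fun i _ => integral_indicator (hS i)

lemma box_integrable (S : Fin 3 → Set ℝ) (hS : ∀ i, MeasurableSet (S i))
    (g : Fin 3 → ℝ → ℝ) (hg : ∀ i, IntegrableOn (g i) (S i)) :
    IntegrableOn (fun x => ∏ i, g i (x i)) (Set.univ.pi S) := by
  rw [← integrable_indicator_iff (MeasurableSet.univ_pi hS), indicator_prod_eq]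
  exact Integrable.fintype_prod fun i =>
    (integrable_indicator_iff (hS i)).2 (hg i)

lemma box_integral3 (S0 S1 S2 : Set ℝ) (h0 : MeasurableSet S0)
    (h1 : MeasurableSet S1) (h2 : MeasurableSet S2) (f0 f1 f2 : ℝ → ℝ) :
    ∫ x in Set.univ.pi ![S0, S1, S2], f0 (x 0) * f1 (x 1) * f2 (x 2) =
      (∫ t in S0, f0 t) * (∫ t in S1, f1 t) * (∫ t in S2, f2 t) := by
  have := box_integral ![S0, S1, S2]
    (fun i => by fin_cases i <;> assumption) ![f0, f1, f2]
  simpa [Fin.prod_univ_three, mul_assoc] using this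

lemma box_integrable3 (S0 S1 S2 : Set ℝ) (h0 : MeasurableSet S0)
    (h1 : MeasurableSet S1) (h2 : MeasurableSet S2) {f0 f1 f2 : ℝ → ℝ}
    (g0 : IntegrableOn f0 S0) (g1 : IntegrableOn f1 S1) (g2 : IntegrableOn f2 S2) :
    IntegrableOn (fun x : Fin 3 → ℝ => f0 (x 0) * f1 (x 1) * f2 (x 2))
      (Set.univ.pi ![S0, S1, S2]) := by
  have := box_integrable ![S0, S1, S2]
    (fun i => by fin_cases i <;> assumption) ![f0, f1, f2]
    (fun i => by fin_cases i <;> assumption)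
  simpa [Fin.prod_univ_three, mul_assoc] using this

lemma int_sub_pow (p q c : ℝ) (n : ℕ) :
    ∫ t in p..q, (t - c) ^ n = ((q - c) ^ (n + 1) - (p - c) ^ (n + 1)) / (n + 1) := by
  rw [intervalIntegral.integral_comp_sub_right (fun t => t ^ n) c, integral_pow]

lemma icc_int (p q : ℝ) (hpq : p ≤ q) (f : ℝ → ℝ) :
    ∫ t in Set.Icc p q, f t = ∫ t in p..q, f t := by
  rw [intervalIntegral.integral_of_le hpq, integral_Icc_eq_integral_Ioc]

set_option maxHeartbeats 1000000 in
/-- for `X` uniform on `[0,1]³`, `m(x) = (x₁−0.5)(x₂−0.5)+x₃` and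
`t = [a₁,a₂]×[b₁,b₂]×[c₁,c₂]`,
`Var(m(X)|X∈t) = H(a₁,a₂)H(b₁,b₂)/9 − (1/16)(a₂+a₁−1)²(b₂+b₁−1)² + (c₂−c₁)²/12`. -/
theorem stmt9 (a₁ a₂ b₁ b₂ c₁ c₂ : ℝ)
    (ha0 : 0 ≤ a₁) (ha : a₁ < a₂) (ha1 : a₂ ≤ 1)
    (hb0 : 0 ≤ b₁) (hb : b₁ < b₂) (hb1 : b₂ ≤ 1)
    (hc0 : 0 ≤ c₁) (hc : c₁ < c₂) (hc1 : c₂ ≤ 1) :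
    ∫ x, (mfun x - ∫ y, mfun y ∂(unifCube[|cell3 a₁ a₂ b₁ b₂ c₁ c₂])) ^ 2
        ∂(unifCube[|cell3 a₁ a₂ b₁ b₂ c₁ c₂]) =
      Hfun a₁ a₂ * Hfun b₁ b₂ / 9 -
        (1 / 16) * (a₂ + a₁ - 1) ^ 2 * (b₂ + b₁ - 1) ^ 2 + (c₂ - c₁) ^ 2 / 12 := by
  have hVa : (0:ℝ) < a₂ - a₁ := by linarith
  have hVb : (0:ℝ) < b₂ - b₁ := by linarith
  have hVc : (0:ℝ) < c₂ - c₁ := by linarith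
  set V : ℝ := (a₂ - a₁) * ((b₂ - b₁) * (c₂ - c₁)) with hVdef
  have hVpos : 0 < V := by positivity
  set T : Set (Fin 3 → ℝ) :=
    Set.univ.pi ![Set.Icc a₁ a₂, Set.Icc b₁ b₂, Set.Icc c₁ c₂] with hTdef
  have hTmeas : MeasurableSet T :=
    MeasurableSet.univ_pi (fun i => by fin_cases i <;> exact measurableSet_Icc)
  have hcell : cell3 a₁ a₂ b₁ b₂ c₁ c₂ = T := by
    ext x
    simp only [cell3, Set.mem_setOf_eq, hTdef, Set.mem_pi, Set.mem_univ,
      forall_true_left]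
    constructor
    · rintro ⟨h0, h1, h2⟩ i; fin_cases i <;> assumption
    · intro h; exact ⟨h 0, h 1, h 2⟩
  have hsub : T ⊆ Set.univ.pi fun _ => Set.Icc (0:ℝ) 1 := by
    apply Set.pi_mono
    intro i _
    fin_cases i <;>
      simp only [Matrix.cons_val_zero, Matrix.cons_val_one, Matrix.head_cons] <;>
      exact Set.Icc_subset_Icc (by linarith) (by linarith)
  have hμr : unifCube.restrict T = volume.restrict T := by
    rw [unifCube, Measure.restrict_restrict hTmeas, Set.inter_eq_left.2 hsub]
  have hμs : unifCube T = ENNReal.ofReal V := by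
    rw [unifCube, Measure.restrict_apply hTmeas, Set.inter_eq_left.2 hsub,
      hTdef, volume_pi_pi, Fin.prod_univ_three]
    simp only [Matrix.cons_val_zero, Matrix.cons_val_one, Matrix.head_cons,
      Matrix.cons_val_two, Matrix.tail_cons, Real.volume_Icc]
    rw [mul_assoc, ← ENNReal.ofReal_mul hVb.le, ← ENNReal.ofReal_mul hVa.le]
  have hcond : unifCube[|cell3 a₁ a₂ b₁ b₂ c₁ c₂]
      = (ENNReal.ofReal V)⁻¹ • volume.restrict T := by
    rw [hcell, ProbabilityTheory.cond, hμr, hμs]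
  have hsc : ((ENNReal.ofReal V)⁻¹).toReal = V⁻¹ := by
    rw [ENNReal.toReal_inv, ENNReal.toReal_ofReal hVpos.le]
  -- 1-D integrals
  have hI1 : ∀ p q c : ℝ, p ≤ q → ∫ t in Set.Icc p q, (t - c)
      = ((q - c) ^ 2 - (p - c) ^ 2) / 2 := by
    intro p q c hpq
    rw [icc_int p q hpq]
    have h := int_sub_pow p q c 1
    simp only [pow_one] at h
    rw [h]; norm_num
  have hI2 : ∀ p q c : ℝ, p ≤ q → ∫ t in Set.Icc p q, (t - c) ^ 2
      = ((q - c) ^ 3 - (p - c) ^ 3) / 3 := by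
    intro p q c hpq
    rw [icc_int p q hpq]
    rw [int_sub_pow p q c 2]; norm_num
  have hIc : ∀ p q : ℝ, p ≤ q → ∫ _t in Set.Icc p q, (1:ℝ) = q - p := by
    intro p q hpq
    rw [icc_int p q hpq]
    simp
  -- integrability
  have hcont1 : ∀ c : ℝ, Continuous (fun t : ℝ => t - c) := fun c => continuous_id.sub continuous_const
  have hintOn : ∀ (f : ℝ → ℝ), Continuous f → ∀ p q : ℝ, IntegrableOn f (Set.Icc p q) :=
    fun f hf p q => hf.integrableOn_Icc
  set MS := @measurableSet_Icc ℝ _ _ _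
  -- explicit box integrals
  have E1 : (∫ x in T, (x 0 - 0.5) * (x 1 - 0.5) * 1)
      = (∫ t in Set.Icc a₁ a₂, (t - 0.5)) * (∫ t in Set.Icc b₁ b₂, (t - 0.5))
        * (∫ _t in Set.Icc c₁ c₂, (1:ℝ)) :=
    box_integral3 _ _ _ measurableSet_Icc measurableSet_Icc measurableSet_Icc
      (fun t => t - 0.5) (fun t => t - 0.5) (fun _ => 1)
  have E2 : (∫ x in T, 1 * 1 * (x 2 - 0))
      = (∫ _t in Set.Icc a₁ a₂, (1:ℝ)) * (∫ _t in Set.Icc b₁ b₂, (1:ℝ))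
        * (∫ t in Set.Icc c₁ c₂, (t - 0)) :=
    box_integral3 _ _ _ measurableSet_Icc measurableSet_Icc measurableSet_Icc
      (fun _ => 1) (fun _ => 1) (fun t => t - 0)
  have J1 : IntegrableOn (fun x : Fin 3 → ℝ => (x 0 - 0.5) * (x 1 - 0.5) * 1) T :=
    box_integrable3 _ _ _ measurableSet_Icc measurableSet_Icc measurableSet_Icc
      (f0 := fun t => t - 0.5) (f1 := fun t => t - 0.5) (f2 := fun _ => 1)
      (hintOn _ (hcont1 0.5) _ _) (hintOn _ (hcont1 0.5) _ _)
      (hintOn _ continuous_const _ _)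
  have J2 : IntegrableOn (fun x : Fin 3 → ℝ => 1 * 1 * (x 2 - 0)) T :=
    box_integrable3 _ _ _ measurableSet_Icc measurableSet_Icc measurableSet_Icc
      (f0 := fun _ => 1) (f1 := fun _ => 1) (f2 := fun t => t - 0)
      (hintOn _ continuous_const _ _) (hintOn _ continuous_const _ _)
      (hintOn _ (hcont1 0) _ _)
  -- the conditional mean
  set M : ℝ := ∫ y, mfun y ∂(unifCube[|cell3 a₁ a₂ b₁ b₂ c₁ c₂]) with hMdef
  have hmean : M = (a₂ + a₁ - 1) / 2 * ((b₂ + b₁ - 1) / 2) + (c₁ + c₂) / 2 := by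
    rw [hMdef, hcond, integral_smul_measure, hsc, smul_eq_mul]
    have e1 : ∀ x : Fin 3 → ℝ, mfun x
        = (x 0 - 0.5) * (x 1 - 0.5) * 1 + 1 * 1 * (x 2 - 0) := by
      intro x; simp [mfun]
    rw [integral_congr_ae (Filter.Eventually.of_forall fun x => e1 x)]
    rw [integral_add J1 J2, E1, E2,
      hI1 _ _ _ ha.le, hI1 _ _ _ hb.le, hI1 _ _ _ hc.le,
      hIc _ _ ha.le, hIc _ _ hb.le, hIc _ _ hc.le]
    field_simp
    ring
  -- the variance
  rw [hcond, integral_smul_measure, hsc, smul_eq_mul]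
  have e2 : ∀ x : Fin 3 → ℝ, (mfun x - M) ^ 2
      = (x 0 - 0.5) ^ 2 * (x 1 - 0.5) ^ 2 * 1
        + (x 0 - 0.5) * (x 1 - 0.5) * (2 * (x 2 - M))
        + 1 * 1 * (x 2 - M) ^ 2 := by
    intro x; simp only [mfun]; ring
  rw [integral_congr_ae (Filter.Eventually.of_forall fun x => e2 x)]
  have i1 : IntegrableOn (fun x : Fin 3 → ℝ =>
      (x 0 - 0.5) ^ 2 * (x 1 - 0.5) ^ 2 * 1) T :=
    box_integrable3 _ _ _ measurableSet_Icc measurableSet_Icc measurableSet_Icc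
      (f0 := fun t => (t - 0.5) ^ 2) (f1 := fun t => (t - 0.5) ^ 2) (f2 := fun _ => 1)
      (hintOn _ ((hcont1 0.5).pow 2) _ _) (hintOn _ ((hcont1 0.5).pow 2) _ _)
      (hintOn _ continuous_const _ _)
  have i2 : IntegrableOn (fun x : Fin 3 → ℝ =>
      (x 0 - 0.5) * (x 1 - 0.5) * (2 * (x 2 - M))) T :=
    box_integrable3 _ _ _ measurableSet_Icc measurableSet_Icc measurableSet_Icc
      (f0 := fun t => t - 0.5) (f1 := fun t => t - 0.5) (f2 := fun t => 2 * (t - M))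
      (hintOn _ (hcont1 0.5) _ _) (hintOn _ (hcont1 0.5) _ _)
      (hintOn _ (continuous_const.mul (hcont1 M)) _ _)
  have i3 : IntegrableOn (fun x : Fin 3 → ℝ => 1 * 1 * (x 2 - M) ^ 2) T :=
    box_integrable3 _ _ _ measurableSet_Icc measurableSet_Icc measurableSet_Icc
      (f0 := fun _ => 1) (f1 := fun _ => 1) (f2 := fun t => (t - M) ^ 2)
      (hintOn _ continuous_const _ _) (hintOn _ continuous_const _ _)
      (hintOn _ ((hcont1 M).pow 2) _ _)
  have F1 : (∫ x in T, (x 0 - 0.5) ^ 2 * (x 1 - 0.5) ^ 2 * 1)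
      = (∫ t in Set.Icc a₁ a₂, (t - 0.5) ^ 2) * (∫ t in Set.Icc b₁ b₂, (t - 0.5) ^ 2)
        * (∫ _t in Set.Icc c₁ c₂, (1:ℝ)) :=
    box_integral3 _ _ _ measurableSet_Icc measurableSet_Icc measurableSet_Icc
      (fun t => (t - 0.5) ^ 2) (fun t => (t - 0.5) ^ 2) (fun _ => 1)
  have F2 : (∫ x in T, (x 0 - 0.5) * (x 1 - 0.5) * (2 * (x 2 - M)))
      = (∫ t in Set.Icc a₁ a₂, (t - 0.5)) * (∫ t in Set.Icc b₁ b₂, (t - 0.5))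
        * (∫ t in Set.Icc c₁ c₂, (2 * (t - M))) :=
    box_integral3 _ _ _ measurableSet_Icc measurableSet_Icc measurableSet_Icc
      (fun t => t - 0.5) (fun t => t - 0.5) (fun t => 2 * (t - M))
  have F3 : (∫ x in T, 1 * 1 * (x 2 - M) ^ 2)
      = (∫ _t in Set.Icc a₁ a₂, (1:ℝ)) * (∫ _t in Set.Icc b₁ b₂, (1:ℝ))
        * (∫ t in Set.Icc c₁ c₂, (t - M) ^ 2) :=
    box_integral3 _ _ _ measurableSet_Icc measurableSet_Icc measurableSet_Icc
      (fun _ => 1) (fun _ => 1) (fun t => (t - M) ^ 2)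
  have h2c : ∫ t in Set.Icc c₁ c₂, (2 * (t - M))
      = 2 * (((c₂ - M) ^ 2 - (c₁ - M) ^ 2) / 2) := by
    rw [icc_int _ _ hc.le, intervalIntegral.integral_const_mul, ← icc_int _ _ hc.le,
      hI1 _ _ _ hc.le]
  have hsplit := integral_add (μ := volume.restrict T) (i1.add i2) i3
  simp only [Pi.add_apply] at hsplit
  rw [hsplit, integral_add i1 i2, F1, F2, F3,
    hI2 _ _ _ ha.le, hI2 _ _ _ hb.le, hI2 _ _ _ hc.le, h2c,
    hI1 _ _ _ ha.le, hI1 _ _ _ hb.le,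
    hIc _ _ ha.le, hIc _ _ hb.le, hIc _ _ hc.le, hmean]
  rw [Hfun, Hfun, inv_mul_eq_div, div_eq_iff (ne_of_gt hVpos), hVdef]
  ring
end

section
/- Let X be uniform on [0,1]³ and m(x) = (x₁−0.5)(x₂−0.5)+x₃. For t = [a₁,a₂]×[b₁,b₂]×[c₁,c₂] and a split of t at coordinate 3 and position c ∈ (c₁, c₂) into t₁ = {x ∈ t : x₃ ≤ c} and t₂ = t∖t₁, the impurity decrease S(t; {t₁,t₂}) equals (c−c₁)(c₂−c)/4, and its supremum over c is (c₂−c₁)²/16, attained at c = (c₁+c₂)/2. -/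
open MeasureTheory ProbabilityTheory

/-- Conditional mean `E[m(X) | X ∈ A]` for `X` uniform on the unit cube. -/
noncomputable def condMean3 (A : Set (Fin 3 → ℝ)) : ℝ := ∫ x, mfun x ∂(unifCube[|A])

/-- Impurity decrease `S(t;{t₁,t₂}) = P(t₁|t)P(t₂|t)(μ(t₁)−μ(t₂))²` for the split of `t`
at coordinate `j` and position `c`: `t₁ = {x ∈ t : x_j ≤ c}`, `t₂ = t \ t₁`. -/
noncomputable def splitScore (t : Set (Fin 3 → ℝ)) (j : Fin 3) (c : ℝ) : ℝ :=
  ((unifCube[|t]) {x ∈ t | x j ≤ c}).toReal *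
    ((unifCube[|t]) (t \ {x ∈ t | x j ≤ c})).toReal *
    (condMean3 {x ∈ t | x j ≤ c} - condMean3 (t \ {x ∈ t | x j ≤ c})) ^ 2

namespace Stmt10Aux

lemma box_eq_pi (s₀ s₁ s₂ : Set ℝ) :
    {x : Fin 3 → ℝ | x 0 ∈ s₀ ∧ x 1 ∈ s₁ ∧ x 2 ∈ s₂} = Set.univ.pi ![s₀, s₁, s₂] := by
  ext x
  constructor
  · rintro ⟨h0, h1, h2⟩ i -
    fin_cases i <;> simpa
  · intro h
    exact ⟨h 0 trivial, h 1 trivial, h 2 trivial⟩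

lemma restrict_pi3 (s : Fin 3 → Set ℝ) (hs : ∀ i, MeasurableSet (s i)) :
    (volume : Measure (Fin 3 → ℝ)).restrict (Set.univ.pi s)
      = Measure.pi fun i => volume.restrict (s i) := by
  haveI : ∀ i, SigmaFinite ((volume : Measure ℝ).restrict (s i)) :=
    fun i => Restrict.sigmaFinite _ _
  refine (Measure.pi_eq (μ := fun i => volume.restrict (s i)) fun t ht => ?_).symm
  rw [Measure.restrict_apply (MeasurableSet.univ_pi ht), ← Set.pi_inter_distrib, volume_pi_pi]
  exact Finset.prod_congr rfl fun i _ => (Measure.restrict_apply (ht i)).symm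

lemma integral_box (s : Fin 3 → Set ℝ) (hs : ∀ i, MeasurableSet (s i)) (f : Fin 3 → ℝ → ℝ) :
    ∫ x in Set.univ.pi s, ∏ i, f i (x i) = ∏ i, ∫ x in s i, f i x := by
  rw [restrict_pi3 s hs]
  exact integral_fintype_prod_eq_prod (μ := fun i => volume.restrict (s i)) f

lemma measurableSet_vec {s₀ s₁ s₂ : Set ℝ} (h0 : MeasurableSet s₀) (h1 : MeasurableSet s₁)
    (h2 : MeasurableSet s₂) : ∀ i, MeasurableSet (![s₀, s₁, s₂] i) := by
  intro i; fin_cases i <;> simpa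

section box

variable {a₁ a₂ b₁ b₂ γ₁ γ₂ : ℝ} {I : Set ℝ}

lemma box_subset_cube (ha0 : 0 ≤ a₁) (ha1 : a₂ ≤ 1) (hb0 : 0 ≤ b₁) (hb1 : b₂ ≤ 1)
    (hIsub : I ⊆ Set.Icc 0 1) :
    {x : Fin 3 → ℝ | x 0 ∈ Set.Icc a₁ a₂ ∧ x 1 ∈ Set.Icc b₁ b₂ ∧ x 2 ∈ I}
      ⊆ Set.univ.pi fun _ => Set.Icc (0:ℝ) 1 := by
  rintro x ⟨h0, h1, h2⟩ i -
  fin_cases i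
  · exact Set.Icc_subset_Icc ha0 ha1 h0
  · exact Set.Icc_subset_Icc hb0 hb1 h1
  · exact hIsub h2

lemma measurableSet_box (hI : MeasurableSet I) :
    MeasurableSet {x : Fin 3 → ℝ | x 0 ∈ Set.Icc a₁ a₂ ∧ x 1 ∈ Set.Icc b₁ b₂ ∧ x 2 ∈ I} := by
  rw [box_eq_pi]
  exact MeasurableSet.univ_pi (measurableSet_vec measurableSet_Icc measurableSet_Icc hI)

lemma unifCube_box (ha0 : 0 ≤ a₁) (ha : a₁ ≤ a₂) (ha1 : a₂ ≤ 1)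
    (hb0 : 0 ≤ b₁) (hb : b₁ ≤ b₂) (hb1 : b₂ ≤ 1) (hγ : γ₁ ≤ γ₂)
    (hI : MeasurableSet I) (hIsub : I ⊆ Set.Icc 0 1)
    (hIvol : volume I = ENNReal.ofReal (γ₂ - γ₁)) :
    unifCube {x : Fin 3 → ℝ | x 0 ∈ Set.Icc a₁ a₂ ∧ x 1 ∈ Set.Icc b₁ b₂ ∧ x 2 ∈ I}
      = ENNReal.ofReal ((a₂ - a₁) * (b₂ - b₁) * (γ₂ - γ₁)) := by
  rw [unifCube, Measure.restrict_apply (measurableSet_box hI),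
    Set.inter_eq_self_of_subset_left (box_subset_cube ha0 ha1 hb0 hb1 hIsub), box_eq_pi,
    volume_pi_pi, Fin.prod_univ_three]
  simp only [Matrix.cons_val_zero, Matrix.cons_val_one, Matrix.head_cons, Matrix.cons_val_two,
    Matrix.tail_cons, Real.volume_Icc, hIvol]
  rw [← ENNReal.ofReal_mul (by linarith), ← ENNReal.ofReal_mul (by nlinarith)]

lemma integrableOn_box (f : (Fin 3 → ℝ) → ℝ) (hf : Continuous f)
    (ha0 : 0 ≤ a₁) (ha1 : a₂ ≤ 1) (hb0 : 0 ≤ b₁) (hb1 : b₂ ≤ 1) (hIsub : I ⊆ Set.Icc 0 1) :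
    IntegrableOn f {x : Fin 3 → ℝ | x 0 ∈ Set.Icc a₁ a₂ ∧ x 1 ∈ Set.Icc b₁ b₂ ∧ x 2 ∈ I} := by
  have hcc : IsCompact (Set.univ.pi fun _ => Set.Icc (0:ℝ) 1 : Set (Fin 3 → ℝ)) :=
    isCompact_univ_pi fun _ => isCompact_Icc
  exact (hf.continuousOn.integrableOn_compact hcc).mono_set
    (box_subset_cube ha0 ha1 hb0 hb1 hIsub)

lemma condMean_box (ha0 : 0 ≤ a₁) (ha : a₁ < a₂) (ha1 : a₂ ≤ 1)
    (hb0 : 0 ≤ b₁) (hb : b₁ < b₂) (hb1 : b₂ ≤ 1) (hγ : γ₁ < γ₂)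
    (hI : MeasurableSet I) (hIsub : I ⊆ Set.Icc 0 1)
    (hIvol : volume I = ENNReal.ofReal (γ₂ - γ₁))
    (hIint : ∫ x in I, x = (γ₂ ^ 2 - γ₁ ^ 2) / 2) :
    condMean3 {x : Fin 3 → ℝ | x 0 ∈ Set.Icc a₁ a₂ ∧ x 1 ∈ Set.Icc b₁ b₂ ∧ x 2 ∈ I}
      = (∫ x in Set.Icc a₁ a₂, (x - 0.5)) * (∫ x in Set.Icc b₁ b₂, (x - 0.5))
          / ((a₂ - a₁) * (b₂ - b₁)) + (γ₁ + γ₂) / 2 := by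
  have hsub := box_subset_cube (I := I) ha0 ha1 hb0 hb1 hIsub
  have hvol := unifCube_box ha0 ha.le ha1 hb0 hb.le hb1 hγ.le hI hIsub hIvol
  have hres : unifCube.restrict
      {x : Fin 3 → ℝ | x 0 ∈ Set.Icc a₁ a₂ ∧ x 1 ∈ Set.Icc b₁ b₂ ∧ x 2 ∈ I}
      = volume.restrict {x : Fin 3 → ℝ | x 0 ∈ Set.Icc a₁ a₂ ∧ x 1 ∈ Set.Icc b₁ b₂ ∧ x 2 ∈ I} := by
    rw [unifCube, Measure.restrict_restrict_of_subset hsub]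
  have hmf : ∀ x : Fin 3 → ℝ,
      mfun x = (∏ i, ![fun t => t - 0.5, fun t => t - 0.5, fun _ => (1:ℝ)] i (x i))
        + ∏ i, ![fun _ => (1:ℝ), fun _ => (1:ℝ), fun t => t] i (x i) := by
    intro x
    simp [mfun, Fin.prod_univ_three]
  have hcont1 : Continuous fun x : Fin 3 → ℝ =>
      ∏ i, ![fun t => t - 0.5, fun t => t - 0.5, fun _ => (1:ℝ)] i (x i) := by
    simp only [Fin.prod_univ_three, Matrix.cons_val_zero, Matrix.cons_val_one, Matrix.head_cons,
      Matrix.cons_val_two, Matrix.tail_cons]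
    fun_prop
  have hcont2 : Continuous fun x : Fin 3 → ℝ =>
      ∏ i, ![fun _ => (1:ℝ), fun _ => (1:ℝ), fun t => t] i (x i) := by
    simp only [Fin.prod_univ_three, Matrix.cons_val_zero, Matrix.cons_val_one, Matrix.head_cons,
      Matrix.cons_val_two, Matrix.tail_cons]
    fun_prop
  have hIlen : ∫ x in I, (1:ℝ) = γ₂ - γ₁ := by
    rw [setIntegral_const, measureReal_def, hIvol, ENNReal.toReal_ofReal (by linarith)]
    simp
  have hIcc : ∀ u v : ℝ, ∫ x in Set.Icc u v, (1:ℝ) = (volume (Set.Icc u v)).toReal := by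
    intro u v; rw [setIntegral_const]; simp [ENNReal.toReal_ofReal']
  have hint : ∫ x in {x : Fin 3 → ℝ | x 0 ∈ Set.Icc a₁ a₂ ∧ x 1 ∈ Set.Icc b₁ b₂ ∧ x 2 ∈ I},
      mfun x
      = (∫ x in Set.Icc a₁ a₂, (x - 0.5)) * (∫ x in Set.Icc b₁ b₂, (x - 0.5)) * (γ₂ - γ₁)
        + (a₂ - a₁) * (b₂ - b₁) * ((γ₂ ^ 2 - γ₁ ^ 2) / 2) := by
    have h1 := integrableOn_box _ hcont1 ha0 ha1 hb0 hb1 hIsub (a₁ := a₁) (a₂ := a₂)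
      (b₁ := b₁) (b₂ := b₂) (I := I)
    have h2 := integrableOn_box _ hcont2 ha0 ha1 hb0 hb1 hIsub (a₁ := a₁) (a₂ := a₂)
      (b₁ := b₁) (b₂ := b₂) (I := I)
    rw [show (fun x => mfun x) = fun x =>
        (∏ i, ![fun t => t - 0.5, fun t => t - 0.5, fun _ => (1:ℝ)] i (x i))
        + ∏ i, ![fun _ => (1:ℝ), fun _ => (1:ℝ), fun t => t] i (x i) from funext hmf]
    rw [integral_add h1 h2, box_eq_pi,
      integral_box _ (measurableSet_vec measurableSet_Icc measurableSet_Icc hI),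
      integral_box _ (measurableSet_vec measurableSet_Icc measurableSet_Icc hI),
      Fin.prod_univ_three, Fin.prod_univ_three]
    simp only [Matrix.cons_val_zero, Matrix.cons_val_one, Matrix.head_cons, Matrix.cons_val_two,
      Matrix.tail_cons]
    rw [hIlen, hIint, hIcc, hIcc, Real.volume_Icc, Real.volume_Icc,
      ENNReal.toReal_ofReal (by linarith), ENNReal.toReal_ofReal (by linarith)]
  have hP : (0:ℝ) < (a₂ - a₁) * (b₂ - b₁) * (γ₂ - γ₁) :=
    mul_pos (mul_pos (by linarith) (by linarith)) (by linarith)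
  rw [condMean3, ProbabilityTheory.cond, hres, hvol, integral_smul_measure, smul_eq_mul,
    ENNReal.toReal_inv, ENNReal.toReal_ofReal hP.le, hint]
  have hL : (a₂ - a₁) * (b₂ - b₁) ≠ 0 := (mul_pos (by linarith) (by linarith)).ne'
  have hγ' : γ₂ - γ₁ ≠ 0 := (sub_pos.mpr hγ).ne'
  field_simp
  rw [div_eq_iff hL, mul_add, add_mul, mul_div_assoc', div_mul_cancel₀ _ hL]
  ring


lemma score_eq {a₁ a₂ b₁ b₂ c₁ c₂ c : ℝ}
    (ha0 : 0 ≤ a₁) (ha : a₁ < a₂) (ha1 : a₂ ≤ 1)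
    (hb0 : 0 ≤ b₁) (hb : b₁ < b₂) (hb1 : b₂ ≤ 1)
    (hc0 : 0 ≤ c₁) (hc : c₁ < c₂) (hc1 : c₂ ≤ 1)
    (h1 : c₁ < c) (h2 : c < c₂) :
    splitScore (cell3 a₁ a₂ b₁ b₂ c₁ c₂) 2 c = (c - c₁) * (c₂ - c) / 4 := by
  have hIcc1 : Set.Icc c₁ c ⊆ Set.Icc (0:ℝ) 1 := Set.Icc_subset_Icc hc0 (by linarith)
  have hIoc2 : Set.Ioc c c₂ ⊆ Set.Icc (0:ℝ) 1 :=
    Set.Ioc_subset_Icc_self.trans (Set.Icc_subset_Icc (by linarith) hc1)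
  have hIccfull : Set.Icc c₁ c₂ ⊆ Set.Icc (0:ℝ) 1 := Set.Icc_subset_Icc hc0 hc1
  have ht1 : {x ∈ cell3 a₁ a₂ b₁ b₂ c₁ c₂ | x 2 ≤ c}
      = {x : Fin 3 → ℝ | x 0 ∈ Set.Icc a₁ a₂ ∧ x 1 ∈ Set.Icc b₁ b₂ ∧ x 2 ∈ Set.Icc c₁ c} := by
    ext x
    simp only [cell3, Set.mem_setOf_eq, Set.mem_sep_iff, Set.mem_Icc]
    constructor
    · rintro ⟨⟨h0, h1', h2'⟩, h3⟩
      exact ⟨h0, h1', h2'.1, h3⟩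
    · rintro ⟨h0, h1', h2', h3⟩
      exact ⟨⟨h0, h1', h2', by linarith⟩, h3⟩
  have ht2 : cell3 a₁ a₂ b₁ b₂ c₁ c₂ \ {x ∈ cell3 a₁ a₂ b₁ b₂ c₁ c₂ | x 2 ≤ c}
      = {x : Fin 3 → ℝ | x 0 ∈ Set.Icc a₁ a₂ ∧ x 1 ∈ Set.Icc b₁ b₂ ∧ x 2 ∈ Set.Ioc c c₂} := by
    ext x
    simp only [cell3, Set.mem_diff, Set.mem_setOf_eq, Set.mem_sep_iff, Set.mem_Icc, Set.mem_Ioc]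
    constructor
    · rintro ⟨⟨h0, h1', h2a, h2b⟩, hn⟩
      refine ⟨h0, h1', lt_of_not_ge fun hle => hn ⟨⟨h0, h1', h2a, h2b⟩, hle⟩, h2b⟩
    · rintro ⟨h0, h1', h2a, h2b⟩
      exact ⟨⟨h0, h1', by linarith, h2b⟩, fun hmem => absurd hmem.2 (not_le.mpr h2a)⟩
  have hcell : cell3 a₁ a₂ b₁ b₂ c₁ c₂
      = {x : Fin 3 → ℝ | x 0 ∈ Set.Icc a₁ a₂ ∧ x 1 ∈ Set.Icc b₁ b₂ ∧ x 2 ∈ Set.Icc c₁ c₂} := rfl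
  have hmt : MeasurableSet (cell3 a₁ a₂ b₁ b₂ c₁ c₂) := by
    rw [hcell]; exact measurableSet_box measurableSet_Icc
  have hμt : unifCube (cell3 a₁ a₂ b₁ b₂ c₁ c₂)
      = ENNReal.ofReal ((a₂ - a₁) * (b₂ - b₁) * (c₂ - c₁)) := by
    rw [hcell]
    exact unifCube_box ha0 ha.le ha1 hb0 hb.le hb1 hc.le measurableSet_Icc hIccfull
      (Real.volume_Icc)
  have hμ1 : unifCube {x : Fin 3 → ℝ | x 0 ∈ Set.Icc a₁ a₂ ∧ x 1 ∈ Set.Icc b₁ b₂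
      ∧ x 2 ∈ Set.Icc c₁ c} = ENNReal.ofReal ((a₂ - a₁) * (b₂ - b₁) * (c - c₁)) :=
    unifCube_box ha0 ha.le ha1 hb0 hb.le hb1 h1.le measurableSet_Icc hIcc1 (Real.volume_Icc)
  have hμ2 : unifCube {x : Fin 3 → ℝ | x 0 ∈ Set.Icc a₁ a₂ ∧ x 1 ∈ Set.Icc b₁ b₂
      ∧ x 2 ∈ Set.Ioc c c₂} = ENNReal.ofReal ((a₂ - a₁) * (b₂ - b₁) * (c₂ - c)) :=
    unifCube_box ha0 ha.le ha1 hb0 hb.le hb1 h2.le measurableSet_Ioc hIoc2 (Real.volume_Ioc)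
  have hi1 : ∫ x in Set.Icc c₁ c, x = (c ^ 2 - c₁ ^ 2) / 2 := by
    rw [MeasureTheory.integral_Icc_eq_integral_Ioc, ← intervalIntegral.integral_of_le h1.le,
      integral_id]
  have hi2 : ∫ x in Set.Ioc c c₂, x = (c₂ ^ 2 - c ^ 2) / 2 := by
    rw [← intervalIntegral.integral_of_le h2.le, integral_id]
  have hm1 := condMean_box ha0 ha ha1 hb0 hb hb1 h1 measurableSet_Icc hIcc1
    (Real.volume_Icc) hi1
  have hm2 := condMean_box ha0 ha ha1 hb0 hb hb1 h2 measurableSet_Ioc hIoc2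
    (Real.volume_Ioc) hi2
  rw [splitScore, cond_apply hmt, cond_apply hmt,
    Set.inter_eq_self_of_subset_right (Set.sep_subset _ _),
    Set.inter_eq_self_of_subset_right Set.diff_subset, ht2, ht1, hμt, hμ1, hμ2, hm1, hm2,
    ENNReal.toReal_mul, ENNReal.toReal_mul, ENNReal.toReal_inv]
  have hT : (0:ℝ) < (a₂ - a₁) * (b₂ - b₁) * (c₂ - c₁) :=
    mul_pos (mul_pos (by linarith) (by linarith)) (by linarith)
  have hT1 : (0:ℝ) ≤ (a₂ - a₁) * (b₂ - b₁) * (c - c₁) :=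
    mul_nonneg (mul_nonneg (by linarith) (by linarith)) (by linarith)
  have hT2 : (0:ℝ) ≤ (a₂ - a₁) * (b₂ - b₁) * (c₂ - c) :=
    mul_nonneg (mul_nonneg (by linarith) (by linarith)) (by linarith)
  rw [ENNReal.toReal_ofReal hT.le, ENNReal.toReal_ofReal hT1, ENNReal.toReal_ofReal hT2]
  have hL : (a₂ - a₁) * (b₂ - b₁) ≠ 0 := (mul_pos (by linarith) (by linarith)).ne'
  have hcd : c₂ - c₁ ≠ 0 := (sub_pos.mpr hc).ne'
  field_simp
  rw [div_eq_iff hL]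
  ring

end box

end Stmt10Aux

/-- splitting `t = [a₁,a₂]×[b₁,b₂]×[c₁,c₂]` at coordinate 3 and `c ∈ (c₁,c₂)`
gives impurity decrease `(c−c₁)(c₂−c)/4`, with supremum `(c₂−c₁)²/16` attained at the
midpoint `(c₁+c₂)/2`. -/
theorem stmt10 (a₁ a₂ b₁ b₂ c₁ c₂ : ℝ)
    (ha0 : 0 ≤ a₁) (ha : a₁ < a₂) (ha1 : a₂ ≤ 1)
    (hb0 : 0 ≤ b₁) (hb : b₁ < b₂) (hb1 : b₂ ≤ 1)
    (hc0 : 0 ≤ c₁) (hc : c₁ < c₂) (hc1 : c₂ ≤ 1) :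
    (∀ c ∈ Set.Ioo c₁ c₂,
        splitScore (cell3 a₁ a₂ b₁ b₂ c₁ c₂) 2 c = (c - c₁) * (c₂ - c) / 4) ∧
      splitScore (cell3 a₁ a₂ b₁ b₂ c₁ c₂) 2 ((c₁ + c₂) / 2) = (c₂ - c₁) ^ 2 / 16 ∧
      ∀ c ∈ Set.Ioo c₁ c₂,
        splitScore (cell3 a₁ a₂ b₁ b₂ c₁ c₂) 2 c ≤ (c₂ - c₁) ^ 2 / 16 := by
  have key : ∀ c ∈ Set.Ioo c₁ c₂,
      splitScore (cell3 a₁ a₂ b₁ b₂ c₁ c₂) 2 c = (c - c₁) * (c₂ - c) / 4 :=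
    fun c hc' => Stmt10Aux.score_eq ha0 ha ha1 hb0 hb hb1 hc0 hc hc1 hc'.1 hc'.2
  refine ⟨key, ?_, ?_⟩
  · rw [key _ ⟨by linarith, by linarith⟩]; ring
  · intro c hc'
    rw [key c hc']
    nlinarith [sq_nonneg (c₁ + c₂ - 2 * c)]
end

section
/- Let X be uniform on [0,1]³, m(x) = (x₁−0.5)(x₂−0.5)+x₃, and t = [0,1]²×[c₁,c₂] with 0 ≤ c₁ < c₂ ≤ 1. Then Var(m(X) | X ∈ t) ≥ 1/144, while the supremum over all axis-aligned single splits of t of the impurity decrease equals (c₂−c₁)²/16. In particular the ratio Var(m(X)|X∈t) / sup_c S_t(c) → ∞ as c₂ − c₁ → 0. -/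
open MeasureTheory ProbabilityTheory

/-- The cell `t = [0,1]² × [c₁,c₂]`. -/
def cell12 (c₁ c₂ : ℝ) : Set (Fin 3 → ℝ) :=
  {x | x 0 ∈ Set.Icc (0:ℝ) 1 ∧ x 1 ∈ Set.Icc (0:ℝ) 1 ∧ x 2 ∈ Set.Icc c₁ c₂}

/-- Conditional variance `Var(m(X) | X ∈ t)`. -/
noncomputable def condVar3 (t : Set (Fin 3 → ℝ)) : ℝ :=
  ∫ x, (mfun x - condMean3 t) ^ 2 ∂(unifCube[|t])

/-- The set of impurity decreases attainable by axis-aligned single splits of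
`t = [0,1]²×[c₁,c₂]` (the split point ranges over the interior of the `j`-th side). -/
def scoreSet (c₁ c₂ : ℝ) : Set ℝ :=
  {s | ∃ j : Fin 3, ∃ c ∈ Set.Ioo (![0, 0, c₁] j) (![1, 1, c₂] j),
    s = splitScore (cell12 c₁ c₂) j c}

-- ================= helpers =================

def boxSet (l u : Fin 3 → ℝ) : Set (Fin 3 → ℝ) := Set.univ.pi fun i => Set.Icc (l i) (u i)

def bVol (l u : Fin 3 → ℝ) : ℝ := (u 0 - l 0) * ((u 1 - l 1) * (u 2 - l 2))
noncomputable def bMean (l u : Fin 3 → ℝ) : ℝ :=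
  ((l 0 + u 0)/2 - 1/2) * ((l 1 + u 1)/2 - 1/2) + (l 2 + u 2)/2

lemma bVol_pos {l u : Fin 3 → ℝ} (h : ∀ i, l i < u i) : 0 < bVol l u :=
  mul_pos (sub_pos.2 (h 0)) (mul_pos (sub_pos.2 (h 1)) (sub_pos.2 (h 2)))

lemma boxSet_meas (l u : Fin 3 → ℝ) : MeasurableSet (boxSet l u) :=
  MeasurableSet.univ_pi fun _ => measurableSet_Icc

lemma boxSet_sub {l u : Fin 3 → ℝ} (h0 : ∀ i, 0 ≤ l i) (h1 : ∀ i, u i ≤ 1) :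
    boxSet l u ⊆ Set.univ.pi fun _ => Set.Icc (0:ℝ) 1 :=
  Set.pi_mono fun i _ => Set.Icc_subset_Icc (h0 i) (h1 i)

lemma integrable_box {f : (Fin 3 → ℝ) → ℝ} (hf : Continuous f) (l u : Fin 3 → ℝ) :
    IntegrableOn f (boxSet l u) := by
  rw [boxSet, Set.pi_univ_Icc]
  exact hf.continuousOn.integrableOn_compact isCompact_Icc

lemma vol_box {l u : Fin 3 → ℝ} (h : ∀ i, l i ≤ u i) :
    volume (boxSet l u) = ENNReal.ofReal (bVol l u) := by
  rw [bVol, boxSet, volume_pi_pi]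
  simp only [Real.volume_Icc, Fin.prod_univ_three]
  rw [ENNReal.ofReal_mul (sub_nonneg.2 (h 0)), ENNReal.ofReal_mul (sub_nonneg.2 (h 1)), mul_assoc]

lemma unif_apply {A : Set (Fin 3 → ℝ)} (hA : MeasurableSet A)
    (hsub : A ⊆ Set.univ.pi fun _ => Set.Icc (0:ℝ) 1) : unifCube A = volume A := by
  rw [unifCube, Measure.restrict_apply hA, Set.inter_eq_self_of_subset_left hsub]

lemma integral_cond {A : Set (Fin 3 → ℝ)} (hA : MeasurableSet A)
    (hsub : A ⊆ Set.univ.pi fun _ => Set.Icc (0:ℝ) 1) (f : (Fin 3 → ℝ) → ℝ) :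
    ∫ x, f x ∂(unifCube[|A]) = (volume A).toReal⁻¹ * ∫ x in A, f x := by
  have h1 : unifCube[|A] = (unifCube A)⁻¹ • unifCube.restrict A := rfl
  rw [h1, integral_smul_measure, unif_apply hA hsub, ENNReal.toReal_inv, smul_eq_mul]
  congr 1
  rw [unifCube, Measure.restrict_restrict hA, Set.inter_eq_self_of_subset_left hsub]

lemma box3 (s : Fin 3 → Set ℝ) (hs : ∀ i, MeasurableSet (s i)) (g : Fin 3 → ℝ → ℝ) :
    ∫ x in Set.univ.pi s, ∏ i, g i (x i) = ∏ i, ∫ y in s i, g i y := by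
  rw [← MeasureTheory.integral_indicator (MeasurableSet.univ_pi hs)]
  have key : ∀ x : Fin 3 → ℝ,
      (Set.univ.pi s).indicator (fun x => ∏ i, g i (x i)) x
        = ∏ i, (s i).indicator (g i) (x i) := by
    intro x
    by_cases h : x ∈ Set.univ.pi s
    · rw [Set.indicator_of_mem h]
      exact Finset.prod_congr rfl fun i _ =>
        (Set.indicator_of_mem (h i (Set.mem_univ i)) _).symm
    · rw [Set.indicator_of_notMem h]
      rw [Set.mem_pi] at h
      push_neg at h
      obtain ⟨i, -, hi⟩ := h
      exact (Finset.prod_eq_zero (Finset.mem_univ i)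
        (by rw [Set.indicator_of_notMem hi])).symm
  simp_rw [key]
  rw [MeasureTheory.integral_fintype_prod_volume_eq_prod (ι := Fin 3) (fun i => (s i).indicator (g i))]
  exact Finset.prod_congr rfl fun i _ => MeasureTheory.integral_indicator (hs i)

lemma boxInt3 (l u : Fin 3 → ℝ) (g : Fin 3 → ℝ → ℝ) :
    ∫ x in boxSet l u, ∏ i, g i (x i) = ∏ i, ∫ y in Set.Icc (l i) (u i), g i y :=
  box3 _ (fun _ => measurableSet_Icc) g

lemma intOne (a b : ℝ) (h : a ≤ b) : ∫ _x in Set.Icc a b, (1:ℝ) = b - a := by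
  simp [Real.volume_Icc, ENNReal.toReal_ofReal (sub_nonneg.2 h), h]

lemma intLin (a b d : ℝ) (h : a ≤ b) : ∫ x in Set.Icc a b, (x - d) = (b-a)*((a+b)/2 - d) := by
  rw [MeasureTheory.integral_Icc_eq_integral_Ioc, ← intervalIntegral.integral_of_le h,
    intervalIntegral.integral_comp_sub_right (fun x => x) d, integral_id]
  ring

lemma intSq (a b d : ℝ) (h : a ≤ b) :
    ∫ x in Set.Icc a b, (x - d)^2 = ((b-d)^3 - (a-d)^3)/3 := by
  rw [MeasureTheory.integral_Icc_eq_integral_Ioc, ← intervalIntegral.integral_of_le h,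
    intervalIntegral.integral_comp_sub_right (fun x => x^2) d, integral_pow]
  norm_num

lemma int_mfun (l u : Fin 3 → ℝ) (h : ∀ i, l i ≤ u i) :
    ∫ x in boxSet l u, mfun x = bVol l u * bMean l u := by
  have hsplit : ∀ x : Fin 3 → ℝ, mfun x =
      (∏ i, (![fun y => y - 2⁻¹, fun y => y - 2⁻¹, fun _ => (1:ℝ)] i) (x i))
        + (∏ i, (![fun _ => (1:ℝ), fun _ => (1:ℝ), fun y => y] i) (x i)) := by
    intro x
    simp [mfun, Fin.prod_univ_three]
    norm_num
  rw [show (fun x => mfun x) = fun x =>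
      (∏ i, (![fun y => y - 2⁻¹, fun y => y - 2⁻¹, fun _ => (1:ℝ)] i) (x i))
        + (∏ i, (![fun _ => (1:ℝ), fun _ => (1:ℝ), fun y => y] i) (x i)) from funext hsplit]
  rw [MeasureTheory.integral_add]
  · rw [boxInt3, boxInt3]
    simp only [Fin.prod_univ_three, Matrix.cons_val_zero, Matrix.cons_val_one, Matrix.head_cons,
      Matrix.cons_val_two, Matrix.tail_cons]
    rw [intOne _ _ (h 2), intLin _ _ _ (h 0), intLin _ _ _ (h 1), intOne _ _ (h 0),
      intOne _ _ (h 1)]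
    have : ∫ y in Set.Icc (l 2) (u 2), y = (u 2 - l 2) * ((l 2 + u 2)/2) := by
      have := intLin (l 2) (u 2) 0 (h 2)
      simpa using this
    rw [this, bVol, bMean]
    ring
  · have hc : Continuous fun x : Fin 3 → ℝ =>
        ∏ i, (![fun y => y - 2⁻¹, fun y => y - 2⁻¹, fun _ => (1:ℝ)] i) (x i) := by
      simp only [Fin.prod_univ_three, Matrix.cons_val_zero, Matrix.cons_val_one, Matrix.head_cons,
        Matrix.cons_val_two, Matrix.tail_cons]
      fun_prop
    exact integrable_box hc l u
  · have hc : Continuous fun x : Fin 3 → ℝ =>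
        ∏ i, (![fun _ => (1:ℝ), fun _ => (1:ℝ), fun y => y] i) (x i) := by
      simp only [Fin.prod_univ_three, Matrix.cons_val_zero, Matrix.cons_val_one, Matrix.head_cons,
        Matrix.cons_val_two, Matrix.tail_cons]
      fun_prop
    exact integrable_box hc l u

lemma condMean3_box (l u : Fin 3 → ℝ) (h : ∀ i, l i < u i) (h0 : ∀ i, 0 ≤ l i)
    (h1 : ∀ i, u i ≤ 1) : condMean3 (boxSet l u) = bMean l u := by
  have hle : ∀ i, l i ≤ u i := fun i => (h i).le
  have hv : 0 < bVol l u := bVol_pos h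
  rw [condMean3, integral_cond (boxSet_meas l u) (boxSet_sub h0 h1), int_mfun l u hle,
    vol_box hle, ENNReal.toReal_ofReal hv.le]
  field_simp

lemma hyper_null (j : Fin 3) (c : ℝ) : volume {x : Fin 3 → ℝ | x j = c} = 0 := by
  have he : {x : Fin 3 → ℝ | x j = c}
      = Set.univ.pi (fun i => if i = j then {c} else Set.univ) := by
    ext x
    simp only [Set.mem_setOf_eq, Set.mem_pi, Set.mem_univ, forall_true_left]
    constructor
    · intro h i
      by_cases hi : i = j
      · subst hi; simp [h]
      · simp [hi]
    · intro h
      have := h j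
      simpa using this
  rw [he, volume_pi_pi]
  refine Finset.prod_eq_zero (Finset.mem_univ j) ?_
  simp

lemma cond_congr {A B : Set (Fin 3 → ℝ)} (h : A =ᵐ[volume] B) :
    unifCube[|A] = unifCube[|B] := by
  have h' : A =ᵐ[unifCube] B :=
    h.filter_mono (MeasureTheory.ae_mono Measure.restrict_le_self)
  show (unifCube A)⁻¹ • unifCube.restrict A = (unifCube B)⁻¹ • unifCube.restrict B
  rw [measure_congr h', Measure.restrict_congr_set h']

lemma condMean3_congr {A B : Set (Fin 3 → ℝ)} (h : A =ᵐ[volume] B) :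
    condMean3 A = condMean3 B := by
  rw [condMean3, condMean3, cond_congr h]

lemma mem_boxSet {l u x : Fin 3 → ℝ} :
    x ∈ boxSet l u ↔ ∀ i, l i ≤ x i ∧ x i ≤ u i := by
  simp only [boxSet, Set.mem_pi, Set.mem_univ, forall_true_left, Set.mem_Icc]

lemma split_left {l u : Fin 3 → ℝ} {j : Fin 3} {c : ℝ} (hc : c ≤ u j) :
    {x ∈ boxSet l u | x j ≤ c} = boxSet l (Function.update u j c) := by
  ext x
  simp only [Set.mem_setOf_eq, mem_boxSet]
  constructor
  · rintro ⟨hx, hxc⟩ i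
    rcases eq_or_ne i j with rfl | hij
    · rw [Function.update_self]; exact ⟨(hx i).1, hxc⟩
    · rw [Function.update_of_ne hij]; exact hx i
  · intro hx
    have hj := hx j
    rw [Function.update_self] at hj
    refine ⟨fun i => ?_, hj.2⟩
    rcases eq_or_ne i j with rfl | hij
    · exact ⟨hj.1, hj.2.trans hc⟩
    · have := hx i; rwa [Function.update_of_ne hij] at this

lemma split_right_ae {l u : Fin 3 → ℝ} {j : Fin 3} {c : ℝ} (hc : l j ≤ c) :
    ((boxSet l u \ {x ∈ boxSet l u | x j ≤ c} : Set (Fin 3 → ℝ)) =ᵐ[volume]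
      (boxSet (Function.update l j c) u : Set (Fin 3 → ℝ))) := by
  rw [MeasureTheory.ae_eq_set]
  refine ⟨measure_mono_null (fun x hx => ?_) (measure_empty (μ := volume)),
    measure_mono_null (fun x hx => ?_) (hyper_null j c)⟩
  · -- (LHS \ RHS) ⊆ ∅
    exfalso
    obtain ⟨⟨hx1, hx2⟩, hx3⟩ := hx
    have hxb := mem_boxSet.1 hx1
    have hxc : ¬ x j ≤ c := fun hle => hx2 ⟨hx1, hle⟩
    refine hx3 (mem_boxSet.2 fun i => ?_)
    rcases eq_or_ne i j with rfl | hij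
    · rw [Function.update_self]; exact ⟨(not_le.1 hxc).le, (hxb i).2⟩
    · rw [Function.update_of_ne hij]; exact hxb i
  · -- (RHS \ LHS) ⊆ {x j = c}
    obtain ⟨hx1, hx2⟩ := hx
    have hxb := mem_boxSet.1 hx1
    have hxB : x ∈ boxSet l u := mem_boxSet.2 fun i => by
      rcases eq_or_ne i j with rfl | hij
      · have := hxb i; rw [Function.update_self] at this
        exact ⟨hc.trans this.1, this.2⟩
      · have := hxb i; rwa [Function.update_of_ne hij] at this
    have hcx : c ≤ x j := by
      have h2 := hxb j
      rw [Function.update_self] at h2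
      exact h2.1
    have hxc : x j ≤ c := by
      by_contra hgt
      exact hx2 ⟨hxB, fun hmem => hgt hmem.2⟩
    exact le_antisymm hxc hcx

lemma update_bounds_u {l u : Fin 3 → ℝ} {j : Fin 3} {c : ℝ} (h : ∀ i, l i < u i)
    (h1 : ∀ i, u i ≤ 1) (hc1 : l j < c) (hc2 : c ≤ u j) :
    (∀ i, l i < Function.update u j c i) ∧ (∀ i, Function.update u j c i ≤ 1) := by
  constructor <;> intro i <;> rcases eq_or_ne i j with rfl | hij
  · rw [Function.update_self]; exact hc1
  · rw [Function.update_of_ne hij]; exact h i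
  · rw [Function.update_self]; exact hc2.trans (h1 i)
  · rw [Function.update_of_ne hij]; exact h1 i

lemma update_bounds_l {l u : Fin 3 → ℝ} {j : Fin 3} {c : ℝ} (h : ∀ i, l i < u i)
    (h0 : ∀ i, 0 ≤ l i) (hc1 : l j ≤ c) (hc2 : c < u j) :
    (∀ i, Function.update l j c i < u i) ∧ (∀ i, 0 ≤ Function.update l j c i) := by
  constructor <;> intro i <;> rcases eq_or_ne i j with rfl | hij
  · rw [Function.update_self]; exact hc2
  · rw [Function.update_of_ne hij]; exact h i
  · rw [Function.update_self]; exact (h0 i).trans hc1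
  · rw [Function.update_of_ne hij]; exact h0 i

lemma vol_split (l u : Fin 3 → ℝ) (j : Fin 3) (c : ℝ) :
    bVol l u = bVol l (Function.update u j c) + bVol (Function.update l j c) u := by
  fin_cases j <;>
    simp [bVol, Function.update_apply, Fin.ext_iff] <;> ring

lemma splitScore_box (l u : Fin 3 → ℝ) (h : ∀ i, l i < u i) (h0 : ∀ i, 0 ≤ l i)
    (h1 : ∀ i, u i ≤ 1) (j : Fin 3) (c : ℝ) (hc1 : l j < c) (hc2 : c < u j) :
    splitScore (boxSet l u) j c =
      (bVol l (Function.update u j c) / bVol l u) *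
        (bVol (Function.update l j c) u / bVol l u) *
        (bMean l (Function.update u j c) - bMean (Function.update l j c) u)^2 := by
  obtain ⟨hu1, hu2⟩ := update_bounds_u h h1 hc1 hc2.le
  obtain ⟨hl1, hl2⟩ := update_bounds_l h h0 hc1.le hc2
  have hV : 0 < bVol l u := bVol_pos h
  have hV1 : 0 < bVol l (Function.update u j c) := bVol_pos hu1
  have hV2 : 0 < bVol (Function.update l j c) u := bVol_pos hl1
  have hsub : boxSet l u ⊆ Set.univ.pi fun _ => Set.Icc (0:ℝ) 1 := boxSet_sub h0 h1
  have hmeas := boxSet_meas l u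
  have hL : {x ∈ boxSet l u | x j ≤ c} = boxSet l (Function.update u j c) := split_left hc2.le
  have htL : boxSet l u ∩ {x ∈ boxSet l u | x j ≤ c} = {x ∈ boxSet l u | x j ≤ c} :=
    Set.inter_eq_self_of_subset_right (Set.sep_subset _ _)
  have htR : boxSet l u ∩ (boxSet l u \ {x ∈ boxSet l u | x j ≤ c})
      = boxSet l u \ {x ∈ boxSet l u | x j ≤ c} :=
    Set.inter_eq_self_of_subset_right Set.diff_subset
  have hP1 : ((unifCube[|boxSet l u]) {x ∈ boxSet l u | x j ≤ c}).toReal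
      = bVol l (Function.update u j c) / bVol l u := by
    rw [ProbabilityTheory.cond_apply hmeas, htL, hL,
      unif_apply hmeas hsub, unif_apply (boxSet_meas _ _) (boxSet_sub h0 hu2),
      vol_box (fun i => (h i).le), vol_box (fun i => (hu1 i).le),
      ENNReal.toReal_mul, ENNReal.toReal_inv, ENNReal.toReal_ofReal hV.le,
      ENNReal.toReal_ofReal hV1.le]
    ring
  have hvolR : volume (boxSet l u \ {x ∈ boxSet l u | x j ≤ c})
      = ENNReal.ofReal (bVol (Function.update l j c) u) := by
    rw [measure_congr (split_right_ae hc1.le), vol_box (fun i => (hl1 i).le)]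
  have hP2 : ((unifCube[|boxSet l u]) (boxSet l u \ {x ∈ boxSet l u | x j ≤ c})).toReal
      = bVol (Function.update l j c) u / bVol l u := by
    rw [ProbabilityTheory.cond_apply hmeas, htR,
      unif_apply hmeas hsub,
      unif_apply (hmeas.diff (hL ▸ boxSet_meas l (Function.update u j c)))
        (fun x hx => hsub hx.1),
      hvolR, vol_box (fun i => (h i).le),
      ENNReal.toReal_mul, ENNReal.toReal_inv, ENNReal.toReal_ofReal hV.le,
      ENNReal.toReal_ofReal hV2.le]
    ring
  have hM1 : condMean3 {x ∈ boxSet l u | x j ≤ c} = bMean l (Function.update u j c) := by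
    rw [hL]; exact condMean3_box _ _ hu1 h0 hu2
  have hM2 : condMean3 (boxSet l u \ {x ∈ boxSet l u | x j ≤ c})
      = bMean (Function.update l j c) u := by
    rw [condMean3_congr (split_right_ae hc1.le)]
    exact condMean3_box _ _ hl1 hl2 h1
  rw [splitScore, hP1, hP2, hM1, hM2]

lemma cell12_eq_box (c₁ c₂ : ℝ) : cell12 c₁ c₂ = boxSet ![0,0,c₁] ![1,1,c₂] := by
  ext x
  simp only [cell12, Set.mem_setOf_eq, mem_boxSet, Set.mem_Icc]
  constructor
  · rintro ⟨h0, h1, h2⟩ i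
    fin_cases i <;> simpa
  · intro h
    refine ⟨?_, ?_, ?_⟩
    · simpa using h 0
    · simpa using h 1
    · simpa using h 2

lemma cell_lt {c₁ c₂ : ℝ} (h : c₁ < c₂) :
    ∀ i, (![0,0,c₁] : Fin 3 → ℝ) i < ![1,1,c₂] i := by
  intro i; fin_cases i <;> simp [h]

lemma cell_l0 {c₁ : ℝ} (c₂ : ℝ) (h0 : 0 ≤ c₁) : ∀ i, (0:ℝ) ≤ (![0,0,c₁] : Fin 3 → ℝ) i := by
  intro i; fin_cases i <;> simp [h0]

lemma cell_u1 (c₁ : ℝ) {c₂ : ℝ} (h1 : c₂ ≤ 1) : ∀ i, (![1,1,c₂] : Fin 3 → ℝ) i ≤ 1 := by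
  intro i; fin_cases i <;> simp [h1]

lemma splitScore_cell {c₁ c₂ : ℝ} (h0 : 0 ≤ c₁) (h : c₁ < c₂) (h1 : c₂ ≤ 1) (j : Fin 3) (c : ℝ)
    (hc : c ∈ Set.Ioo ((![0,0,c₁] : Fin 3 → ℝ) j) ((![1,1,c₂] : Fin 3 → ℝ) j)) :
    splitScore (cell12 c₁ c₂) j c = if j = 2 then (c - c₁) * (c₂ - c) / 4 else 0 := by
  obtain ⟨hc1, hc2⟩ := hc
  have hd : c₂ - c₁ ≠ 0 := sub_ne_zero.2 h.ne'
  rw [cell12_eq_box, splitScore_box ![0,0,c₁] ![1,1,c₂] (cell_lt h) (cell_l0 c₂ h0) (cell_u1 c₁ h1) j c hc1 hc2]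
  fin_cases j <;>
    norm_num [bVol, bMean, Function.update_apply, Fin.ext_iff, Matrix.cons_val_zero,
      Matrix.cons_val_one, Matrix.head_cons, Matrix.cons_val_two, Matrix.tail_cons] <;>
    field_simp <;> ring

lemma condMean3_cell {c₁ c₂ : ℝ} (h0 : 0 ≤ c₁) (h : c₁ < c₂) (h1 : c₂ ≤ 1) :
    condMean3 (cell12 c₁ c₂) = (c₁ + c₂)/2 := by
  rw [cell12_eq_box, condMean3_box _ _ (cell_lt h) (cell_l0 c₂ h0) (cell_u1 c₁ h1)]
  norm_num [bMean]
  rfl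

lemma condVar3_cell {c₁ c₂ : ℝ} (h0 : 0 ≤ c₁) (h : c₁ < c₂) (h1 : c₂ ≤ 1) :
    condVar3 (cell12 c₁ c₂) = 1/144 + (c₂ - c₁)^2/12 := by
  have hd : (0:ℝ) < c₂ - c₁ := sub_pos.2 h
  set μc : ℝ := (c₁ + c₂)/2 with hμ
  rw [condVar3, condMean3_cell h0 h h1, cell12_eq_box,
    integral_cond (boxSet_meas _ _) (boxSet_sub (cell_l0 c₂ h0) (cell_u1 c₁ h1))]
  have hsplit : ∀ x : Fin 3 → ℝ, (mfun x - μc)^2 =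
      (∏ i, (![fun y => (y-2⁻¹)^2, fun y => (y-2⁻¹)^2, fun _ => (1:ℝ)] i) (x i))
        + ((∏ i, (![fun y => 2*(y-2⁻¹), fun y => y-2⁻¹, fun y => y-μc] i) (x i))
          + (∏ i, (![fun _ => (1:ℝ), fun _ => (1:ℝ), fun y => (y-μc)^2] i) (x i))) := by
    intro x
    simp only [Fin.prod_univ_three, Matrix.cons_val_zero, Matrix.cons_val_one, Matrix.head_cons,
      Matrix.cons_val_two, Matrix.tail_cons, mfun]
    norm_num
    ring
  rw [show (fun x => (mfun x - μc)^2) = fun x =>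
      (∏ i, (![fun y => (y-2⁻¹)^2, fun y => (y-2⁻¹)^2, fun _ => (1:ℝ)] i) (x i))
        + ((∏ i, (![fun y => 2*(y-2⁻¹), fun y => y-2⁻¹, fun y => y-μc] i) (x i))
          + (∏ i, (![fun _ => (1:ℝ), fun _ => (1:ℝ), fun y => (y-μc)^2] i) (x i)))
    from funext hsplit]
  have hcont1 : Continuous fun x : Fin 3 → ℝ =>
      ∏ i, (![fun y => (y-2⁻¹)^2, fun y => (y-2⁻¹)^2, fun _ => (1:ℝ)] i) (x i) := by
    simp only [Fin.prod_univ_three, Matrix.cons_val_zero, Matrix.cons_val_one, Matrix.head_cons,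
      Matrix.cons_val_two, Matrix.tail_cons]
    fun_prop
  have hcont2 : Continuous fun x : Fin 3 → ℝ =>
      ∏ i, (![fun y => 2*(y-2⁻¹), fun y => y-2⁻¹, fun y => y-μc] i) (x i) := by
    simp only [Fin.prod_univ_three, Matrix.cons_val_zero, Matrix.cons_val_one, Matrix.head_cons,
      Matrix.cons_val_two, Matrix.tail_cons]
    fun_prop
  have hcont3 : Continuous fun x : Fin 3 → ℝ =>
      ∏ i, (![fun _ => (1:ℝ), fun _ => (1:ℝ), fun y => (y-μc)^2] i) (x i) := by
    simp only [Fin.prod_univ_three, Matrix.cons_val_zero, Matrix.cons_val_one, Matrix.head_cons,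
      Matrix.cons_val_two, Matrix.tail_cons]
    fun_prop
  have i23 : IntegrableOn (fun x : Fin 3 → ℝ =>
      (∏ i, (![fun y => 2*(y-2⁻¹), fun y => y-2⁻¹, fun y => y-μc] i) (x i))
        + (∏ i, (![fun _ => (1:ℝ), fun _ => (1:ℝ), fun y => (y-μc)^2] i) (x i)))
      (boxSet ![0,0,c₁] ![1,1,c₂]) :=
    (integrable_box hcont2 ![0,0,c₁] ![1,1,c₂]).add
      (integrable_box hcont3 ![0,0,c₁] ![1,1,c₂])
  rw [MeasureTheory.integral_add (integrable_box hcont1 ![0,0,c₁] ![1,1,c₂]) i23,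
    MeasureTheory.integral_add (integrable_box hcont2 ![0,0,c₁] ![1,1,c₂])
      (integrable_box hcont3 ![0,0,c₁] ![1,1,c₂]),
    boxInt3, boxInt3, boxInt3]
  simp only [Fin.prod_univ_three, Matrix.cons_val_zero, Matrix.cons_val_one, Matrix.head_cons,
    Matrix.cons_val_two, Matrix.tail_cons]
  have hsq01 : ∫ y in Set.Icc (0:ℝ) 1, (y - 2⁻¹)^2 = 1/12 := by
    rw [intSq 0 1 2⁻¹ (by norm_num)]; norm_num
  have hlin2 : ∫ y in Set.Icc (0:ℝ) 1, 2*(y - 2⁻¹) = 0 := by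
    rw [integral_const_mul 2, intLin 0 1 2⁻¹ (by norm_num)]
    norm_num
  have hone : ∫ y in Set.Icc c₁ c₂, (1:ℝ) = c₂ - c₁ := intOne _ _ h.le
  have hone01 : ∫ y in Set.Icc (0:ℝ) 1, (1:ℝ) = 1 := by
    rw [intOne 0 1 (by norm_num)]; norm_num
  have hsqc : ∫ y in Set.Icc c₁ c₂, (y - μc)^2 = (c₂ - c₁)^3/12 := by
    rw [intSq c₁ c₂ μc h.le, hμ]; ring
  rw [hsq01, hlin2, hone, hone01, hsqc, vol_box (fun i => (cell_lt h i).le),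
    ENNReal.toReal_ofReal (bVol_pos (cell_lt h)).le]
  have hbv : bVol ![0,0,c₁] ![1,1,c₂] = c₂ - c₁ := by
    norm_num [bVol]
    rfl
  rw [hbv]
  field_simp
  ring

/-- for `t = [0,1]²×[c₁,c₂]`, `Var(m(X)|X∈t) ≥ 1/144` while the supremum of the
impurity decrease over all axis-aligned single splits equals `(c₂−c₁)²/16`; in particular the
ratio `Var/sup` tends to `∞` as `c₂ − c₁ → 0`. -/
theorem stmt12 :
    (∀ c₁ c₂ : ℝ, 0 ≤ c₁ → c₁ < c₂ → c₂ ≤ 1 →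
        1 / 144 ≤ condVar3 (cell12 c₁ c₂) ∧
          IsLUB (scoreSet c₁ c₂) ((c₂ - c₁) ^ 2 / 16)) ∧
      ∀ M : ℝ, ∃ η > 0, ∀ c₁ c₂ : ℝ, 0 ≤ c₁ → c₁ < c₂ → c₂ ≤ 1 → c₂ - c₁ < η →
        M < condVar3 (cell12 c₁ c₂) / ((c₂ - c₁) ^ 2 / 16) := by
  constructor
  · intro c₁ c₂ h0 h h1
    constructor
    · rw [condVar3_cell h0 h h1]
      nlinarith [sq_nonneg (c₂ - c₁)]
    · refine IsGreatest.isLUB ⟨⟨2, (c₁+c₂)/2, ⟨?_, ?_⟩, ?_⟩, ?_⟩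
      · show (![0,0,c₁] : Fin 3 → ℝ) 2 < (c₁+c₂)/2
        show c₁ < (c₁+c₂)/2
        linarith
      · show (c₁+c₂)/2 < (![1,1,c₂] : Fin 3 → ℝ) 2
        show (c₁+c₂)/2 < c₂
        linarith
      · rw [splitScore_cell h0 h h1 2 ((c₁+c₂)/2) ⟨by show c₁ < _; linarith,
          by show _ < c₂; linarith⟩]
        norm_num
        ring
      · rintro s ⟨j, c, hc, rfl⟩
        rw [splitScore_cell h0 h h1 j c hc]
        split_ifs with hj
        · subst hj
          have hc1 : c₁ < c := hc.1
          have hc2 : c < c₂ := hc.2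
          nlinarith [sq_nonneg ((c - c₁) - (c₂ - c))]
        · positivity
  · intro M
    refine ⟨1/(3*(|M|+2)), by positivity, fun c₁ c₂ h0 h h1 hd => ?_⟩
    rw [condVar3_cell h0 h h1]
    have hdd : 0 < c₂ - c₁ := sub_pos.2 h
    rw [lt_div_iff₀ (by positivity)]
    have h3 : (c₂-c₁) * (3*(|M|+2)) < 1 := (lt_div_iff₀ (by positivity)).mp hd
    nlinarith [le_abs_self M, abs_nonneg M, sq_nonneg (c₂-c₁), mul_pos hdd hdd]
end
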